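/- arXiv:1912.01387 — 4 statements merged into one kernel-verified Lean document; each statement's English description precedes it below -/
import Mathlib

section
/- In the N-currency model df_j = μ_j f_j dt + σ_j f_j dW̃_j with correlations ρ_{lk}, the linear system for the N unknowns (market prices of risk γ_1,…,γ_{N−1} and the pseudo-currency rate r_X) obtained from requiring all N discounted assets S_{c_i/X} B_i / B_X to be local martingales has a unique solution, with r_X = (1/N)Σ_{i=1}^N r_i + (1/(2N))(1 − 1/N) Σ_{i=1}^{N−1} σ_i² − (1/N²) Σ_{k=1}^{N−1} Σ_{j=1}^{k−1} σ_j σ_k ρ_{jk}. -/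
/-!
Subtracting the drift condition of the base currency from that of currency `i` eliminates `r_X`
and the common term `Tsum γ`, leaving the system `(diag σ · L) γ = c` with an explicit right-hand
side `c`. Its matrix is lower triangular with diagonal `σ_i L_ii > 0`, so `γ` exists and is
unique, and the base-currency condition then determines `r_X`. Since `Tsum γ` is the sum of the
entries of `(diag σ · L) γ = c`, the value of `r_X` depends on the data only; symmetry and the
unit diagonal of `ρ` turn `∑_{i,j} σ_i σ_j ρ_ij` into the closed form.
-/

open Finset Matrix

theorem Matrix.IsLowerTriangular.existsUnique_mulVec_eq {m K : Type*} [Fintype m] [LinearOrder m]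
    [Field K] {M : Matrix m m K} (hM : M.IsLowerTriangular) (hdiag : ∀ i, M i i ≠ 0)
    (b : m → K) : ∃! x, M *ᵥ x = b := by
  have hunit : IsUnit M := by
    rw [isUnit_iff_isUnit_det, det_of_isLowerTriangular M hM]
    exact isUnit_iff_ne_zero.2 (prod_ne_zero_iff.2 fun i _ => hdiag i)
  exact Function.Bijective.existsUnique
    ⟨mulVec_injective_iff_isUnit.2 hunit, mulVec_surjective_iff_isUnit.2 hunit⟩ b

theorem Matrix.IsLowerTriangular.mulVec_apply {m R : Type*} [Fintype m] [LinearOrder m]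
    [LocallyFiniteOrderBot m] [NonUnitalNonAssocSemiring R] {M : Matrix m m R}
    (hM : M.IsLowerTriangular) (x : m → R) (i : m) :
    (M *ᵥ x) i = ∑ k ∈ Iic i, M i k * x k := by
  refine (sum_subset (subset_univ _) fun k _ hk => ?_).symm
  have hik : OrderDual.toDual k < OrderDual.toDual i := by simpa using hk
  exact mul_eq_zero_of_left (hM hik) _

theorem Finset.sum_sum_eq_sum_diag_add_two_mul_sum_sum_Iio {ι R : Type*} [Fintype ι]
    [LinearOrder ι] [LocallyFiniteOrderBot ι] [LocallyFiniteOrderTop ι] [Semiring R]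
    (a : ι → ι → R) (ha : ∀ i j, a i j = a j i) :
    ∑ i, ∑ j, a i j = ∑ i, a i i + 2 * ∑ k, ∑ j ∈ Iio k, a j k := by
  have hswap : ∑ i, ∑ j ∈ Ioi i, a i j = ∑ k, ∑ j ∈ Iio k, a j k :=
    sum_comm' fun i j => by simp
  calc ∑ i, ∑ j, a i j = ∑ i, (a i i + ∑ j ∈ {i}ᶜ, a i j) :=
        sum_congr rfl fun i _ => Fintype.sum_eq_add_sum_compl i _
    _ = ∑ i, a i i + ∑ i, ∑ j ∈ Ioi i, (a i j + a j i) := by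
        rw [sum_add_distrib, sum_sum_Ioi_add_eq_sum_sum_off_diag]
    _ = ∑ i, a i i + 2 * ∑ k, ∑ j ∈ Iio k, a j k := by
        simp only [← ha, ← two_mul, ← mul_sum, hswap]

theorem sum_sum_mul_mul_eq_sum_sq_add_two_mul {ι R : Type*} [Fintype ι] [LinearOrder ι]
    [LocallyFiniteOrderBot ι] [LocallyFiniteOrderTop ι] [CommSemiring R] (σ : ι → R)
    (ρ : ι → ι → R) (hρsymm : ∀ i j, ρ i j = ρ j i) (hρdiag : ∀ i, ρ i i = 1) :
    ∑ i, ∑ j, σ i * σ j * ρ i j = ∑ i, σ i ^ 2 + 2 * ∑ k, ∑ j ∈ Iio k, σ j * σ k * ρ j k := by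
  rw [sum_sum_eq_sum_diag_add_two_mul_sum_sum_Iio _ fun i j => by rw [hρsymm]; ring]
  simp only [hρdiag, mul_one, sq]

theorem stmt_10_general (n : ℕ)
    (σ μ r : Fin n → ℝ) (rN : ℝ) (ρ L : Fin n → Fin n → ℝ)
    (hσ : ∀ i, 0 < σ i) (hLdiag : ∀ i, 0 < L i i)
    (hLtri : ∀ i j : Fin n, i < j → L i j = 0)
    (hρsymm : ∀ i j, ρ i j = ρ j i) (hρdiag : ∀ i, ρ i i = 1) :
    let N : ℝ := (n : ℝ) + 1
    -- common drift contribution of exchange rate `j`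
    let Cterm : Fin n → ℝ := fun j =>
      (1 / 2) * (1 / N + 1) * (σ j) ^ 2
        + (1 / N) * σ j * ∑ k ∈ Finset.Iio j, σ k * ρ k j - μ j
    let Tsum : (Fin n → ℝ) → ℝ := fun γ =>
      ∑ j, ∑ k ∈ Finset.Iic j, σ j * L j k * γ k
    -- the martingale (zero-excess-drift) system for `(γ, r_X)`
    let Sys : (Fin n → ℝ) × ℝ → Prop := fun q =>
      (∀ i : Fin n,
        r i - q.2 + (1 / N) * (∑ j, (Cterm j - σ i * σ j * ρ i j)) + μ i
          = -(1 / N) * Tsum q.1 + σ i * ∑ k ∈ Finset.Iic i, L i k * q.1 k)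
      ∧ (rN - q.2 + (1 / N) * (∑ j, Cterm j) = -(1 / N) * Tsum q.1)
    (∃! q : (Fin n → ℝ) × ℝ, Sys q)
    ∧ (∀ q : (Fin n → ℝ) × ℝ, Sys q →
        q.2 = (1 / N) * ((∑ i, r i) + rN)
          + (1 / (2 * N)) * (1 - 1 / N) * (∑ i, (σ i) ^ 2)
          - (1 / N) ^ 2 * ∑ k, ∑ j ∈ Finset.Iio k, σ j * σ k * ρ j k) := by
  intro N Cterm Tsum Sys
  set M : Matrix (Fin n) (Fin n) ℝ := Matrix.of fun i k => σ i * L i k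
  have hM : M.IsLowerTriangular := fun i k hik => by simp [M, hLtri i k hik]
  set c : Fin n → ℝ := fun i => r i - rN + μ i - (1 / N) * ∑ j, σ i * σ j * ρ i j
  have hrow : ∀ γ i, σ i * ∑ k ∈ Iic i, L i k * γ k = (M *ᵥ γ) i := fun γ i => by
    simp only [hM.mulVec_apply, mul_sum, M, Matrix.of_apply, mul_assoc]
  have hTsum : ∀ γ, Tsum γ = ∑ i, (M *ᵥ γ) i := fun γ => by
    simp only [Tsum, ← hrow, mul_sum, mul_assoc]
  have hSys : ∀ q, Sys q ↔
      M *ᵥ q.1 = c ∧ q.2 = rN + (1 / N) * ∑ j, Cterm j + (1 / N) * ∑ i, c i := by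
    rintro ⟨γ, x⟩
    simp only [Sys, hrow, hTsum, sum_sub_distrib]
    constructor
    · rintro ⟨hrows, hlast⟩
      have hγ : M *ᵥ γ = c := funext fun i => by linarith [hrows i]
      exact ⟨hγ, by rw [← hγ]; linarith⟩
    · rintro ⟨hγ, rfl⟩
      refine ⟨fun i => ?_, by rw [hγ]; ring⟩
      simp only [hγ, c]
      ring
  obtain ⟨γ, hγ, huniq⟩ :=
    hM.existsUnique_mulVec_eq (fun i => by simp [M, (hσ i).ne', (hLdiag i).ne']) c
  refine ⟨⟨(γ, _), (hSys _).2 ⟨hγ, rfl⟩, fun q hq => ?_⟩, fun q hq => ?_⟩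
  · exact Prod.ext (huniq _ ((hSys q).1 hq).1) ((hSys q).1 hq).2
  · rw [((hSys q).1 hq).2]
    have hCterm : ∑ j, Cterm j = (1 / 2) * (1 / N + 1) * ∑ i, σ i ^ 2
        + (1 / N) * ∑ k, ∑ j ∈ Iio k, σ j * σ k * ρ j k - ∑ i, μ i := by
      simp only [Cterm, sum_sub_distrib, sum_add_distrib, mul_sum]
      congr 2
      exact sum_congr rfl fun k _ => sum_congr rfl fun j _ => by ring
    have hc : ∑ i, c i = ∑ i, r i - n * rN + ∑ i, μ i
        - (1 / N) * (∑ i, σ i ^ 2 + 2 * ∑ k, ∑ j ∈ Iio k, σ j * σ k * ρ j k) := by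
      simp only [c, sum_sub_distrib, sum_add_distrib, ← mul_sum, sum_const, card_univ,
        Fintype.card_fin, nsmul_eq_mul, sum_sum_mul_mul_eq_sum_sq_add_two_mul σ ρ hρsymm hρdiag]
    rw [hCterm, hc]
    simp only [N]
    field_simp
    ring

/-- In the `N`-currency model (`N = n+1`, exchange rates `f_1,…,f_n` with volatilities
`σ_j > 0`, drifts `μ_j`, correlations `ρ_{jk}` with Cholesky factor `L`), the linear system
for the `N` unknowns (market prices of risk `γ_1,…,γ_n` and the pseudo-currency rate `r_X`)
obtained from requiring all `N` discounted assets `S_{c_i/X} B_i / B_X` to be local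
martingales has a unique solution, and any solution has
`r_X = (1/N)Σ r_i + (1/(2N))(1 − 1/N)Σ σ_i² − (1/N²)Σ_k Σ_{j<k} σ_j σ_k ρ_{jk}`. -/
theorem stmt_10 (n : ℕ) (hn : 1 ≤ n)
    (σ μ r : Fin n → ℝ) (rN : ℝ) (ρ L : Fin n → Fin n → ℝ)
    (hσ : ∀ i, 0 < σ i) (hLdiag : ∀ i, 0 < L i i)
    (hLtri : ∀ i j : Fin n, i < j → L i j = 0)
    (hρsymm : ∀ i j, ρ i j = ρ j i) (hρdiag : ∀ i, ρ i i = 1)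
    (hChol : ∀ i j : Fin n, ρ i j = ∑ k ∈ Finset.Iic i ∩ Finset.Iic j, L i k * L j k) :
    let N : ℝ := (n : ℝ) + 1
    -- common drift contribution of exchange rate `j`
    let Cterm : Fin n → ℝ := fun j =>
      (1 / 2) * (1 / N + 1) * (σ j) ^ 2
        + (1 / N) * σ j * ∑ k ∈ Finset.Iio j, σ k * ρ k j - μ j
    let Tsum : (Fin n → ℝ) → ℝ := fun γ =>
      ∑ j, ∑ k ∈ Finset.Iic j, σ j * L j k * γ k
    -- the martingale (zero-excess-drift) system for `(γ, r_X)`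
    let Sys : (Fin n → ℝ) × ℝ → Prop := fun q =>
      (∀ i : Fin n,
        r i - q.2 + (1 / N) * (∑ j, (Cterm j - σ i * σ j * ρ i j)) + μ i
          = -(1 / N) * Tsum q.1 + σ i * ∑ k ∈ Finset.Iic i, L i k * q.1 k)
      ∧ (rN - q.2 + (1 / N) * (∑ j, Cterm j) = -(1 / N) * Tsum q.1)
    (∃! q : (Fin n → ℝ) × ℝ, Sys q)
    ∧ (∀ q : (Fin n → ℝ) × ℝ, Sys q →
        q.2 = (1 / N) * ((∑ i, r i) + rN)
          + (1 / (2 * N)) * (1 - 1 / N) * (∑ i, (σ i) ^ 2)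
          - (1 / N) ^ 2 * ∑ k, ∑ j ∈ Finset.Iio k, σ j * σ k * ρ j k) :=
  stmt_10_general n σ μ r rN ρ L hσ hLdiag hLtri hρsymm hρdiag
end

section
/- Let V = X + α₁ max(β₁ − Y, 0) + α₂ max(Y − β₂, 0) with X, Y independent standard normal and β₁ ≤ β₂. Then for Z = aV, the moment generating function equals M(t) = E[e^{tZ}] = e^{(at)²/2}(N(β₂) − N(β₁)) + e^{(t/2)(ta²(1+α₂²) − 2aα₂β₂)} N(taα₂ − β₂) + e^{(t/2)(ta²(1+α₁²) + 2aα₁β₁)} N(taα₁ + β₁), where N is the standard normal cdf. -/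
/-!
The coordinate `X` factors out of the integral by independence and contributes
`E e^{atX} = e^{(at)²/2}`. Since `β₁ ≤ β₂`, at most one of the hinges `(β₁ - Y)⁺`, `(Y - β₂)⁺` is
nonzero, so `e^{k(α₁(β₁ - Y)⁺ + α₂(Y - β₂)⁺)} = e^{kα₁(β₁ - Y)⁺} + e^{kα₂(Y - β₂)⁺} - 1`.
A single hinge is integrated by splitting at its kink: below it the integrand is `1`, above it
the exponential tilt `e^{cy} φ(y) = e^{c²/2} φ(y - c)` turns the integral into a probability
under a shifted normal law. The left hinge reduces to the right one under `Y ↦ -Y`.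
-/

open MeasureTheory ProbabilityTheory

/-- Standard normal cumulative distribution function. -/
noncomputable def stdNormalCDF (d : ℝ) : ℝ :=
  ((gaussianReal 0 1) (Set.Iic d)).toReal

open Real Set
open scoped NNReal

lemma exp_mul_mul_gaussianPDFReal (μ : ℝ) (v : ℝ≥0) (c x : ℝ) :
    exp (c * x) * gaussianPDFReal μ v x
      = exp (μ * c + v * c ^ 2 / 2) * gaussianPDFReal (μ + v * c) v x := by
  rcases eq_or_ne v 0 with rfl | hv
  · simp
  simp only [gaussianPDFReal]
  rw [mul_left_comm, mul_left_comm (exp _), ← exp_add, ← exp_add]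
  congr 2
  field_simp
  ring

lemma setIntegral_exp_mul_gaussianReal (μ : ℝ) {v : ℝ≥0} (hv : v ≠ 0) (c : ℝ) {s : Set ℝ}
    (hs : MeasurableSet s) :
    ∫ x in s, exp (c * x) ∂gaussianReal μ v
      = exp (μ * c + v * c ^ 2 / 2) * (gaussianReal (μ + v * c) v s).toReal := by
  rw [← integral_indicator hs, integral_gaussianReal_eq_integral_smul hv,
    gaussianReal_apply_eq_integral _ hv,
    ENNReal.toReal_ofReal (setIntegral_nonneg hs fun x _ => gaussianPDFReal_nonneg _ _ x),
    ← integral_const_mul, ← integral_indicator hs]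
  congr 1 with x
  by_cases hx : x ∈ s
  · simp [hx, smul_eq_mul, mul_comm (gaussianPDFReal μ v x), exp_mul_mul_gaussianPDFReal]
  · simp [hx]

lemma gaussianReal_Iic_toReal (m d : ℝ) :
    (gaussianReal m 1 (Iic d)).toReal = stdNormalCDF (d - m) := by
  have hshift : (gaussianReal 0 1).map (· + m) = gaussianReal m 1 := by
    rw [gaussianReal_map_add_const, zero_add]
  rw [← hshift, stdNormalCDF, Measure.map_apply (measurable_add_const m) measurableSet_Iic,
    preimage_add_const_Iic]

lemma gaussianReal_Ioi_toReal (m d : ℝ) :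
    (gaussianReal m 1 (Ioi d)).toReal = stdNormalCDF (m - d) := by
  have := nullSingletonClass_gaussianReal (μ := -m) one_ne_zero
  have hreflect : (gaussianReal (-m) 1).map (fun y => -y) = gaussianReal m 1 := by
    rw [gaussianReal_map_neg, neg_neg]
  rw [← hreflect, Measure.map_apply measurable_neg measurableSet_Ioi, neg_preimage, neg_Ioi,
    measure_congr Iio_ae_eq_Iic, gaussianReal_Iic_toReal, sub_neg_eq_add, neg_add_eq_sub]

lemma stdNormalCDF_neg (x : ℝ) : stdNormalCDF (-x) = 1 - stdNormalCDF x := by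
  rw [← zero_sub, ← gaussianReal_Ioi_toReal, ← compl_Iic, prob_compl_eq_one_sub measurableSet_Iic,
    ENNReal.toReal_sub_of_le prob_le_one ENNReal.one_ne_top, ENNReal.toReal_one, stdNormalCDF]

lemma MeasureTheory.Integrable.exp_mul_max_zero {α : Type*} [MeasurableSpace α] {μ : Measure α}
    [IsFiniteMeasure μ] {f : α → ℝ} (hf : Measurable f) {c : ℝ}
    (hexp : Integrable (fun x => exp (c * f x)) μ) :
    Integrable (fun x => exp (c * max (f x) 0)) μ := by
  refine ((integrable_const 1).add hexp).mono' (by fun_prop) (ae_of_all _ fun x => ?_)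
  rw [norm_of_nonneg (exp_nonneg _)]
  rcases le_total (f x) 0 with h | h
  · simp [max_eq_right h, (exp_pos _).le]
  · simp [max_eq_left h, zero_le_one]

lemma integrable_exp_mul_max_sub_const_gaussianReal (c b : ℝ) :
    Integrable (fun y => exp (c * max (y - b) 0)) (gaussianReal 0 1) := by
  refine Integrable.exp_mul_max_zero (by fun_prop) ?_
  simpa [mul_sub, exp_sub] using (integrable_exp_mul_gaussianReal c).div_const (exp (c * b))

lemma integrable_exp_mul_max_const_sub_gaussianReal (c b : ℝ) :
    Integrable (fun y => exp (c * max (b - y) 0)) (gaussianReal 0 1) := by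
  refine Integrable.exp_mul_max_zero (by fun_prop) ?_
  convert (integrable_exp_mul_gaussianReal (-c)).const_mul (exp (c * b)) using 2 with y
  rw [← exp_add]
  ring_nf

lemma integral_exp_mul_max_sub_const_gaussianReal (c b : ℝ) :
    ∫ y, exp (c * max (y - b) 0) ∂gaussianReal 0 1
      = stdNormalCDF b + exp (c ^ 2 / 2 - c * b) * stdNormalCDF (c - b) := by
  have h_below : ∫ y in Iic b, exp (c * max (y - b) 0) ∂gaussianReal 0 1 = stdNormalCDF b := by
    rw [setIntegral_congr_fun measurableSet_Iic fun y (hy : y ≤ b) => by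
      rw [max_eq_right (sub_nonpos.2 hy), mul_zero, exp_zero]]
    simp [measureReal_def, stdNormalCDF]
  have h_above : ∫ y in Ioi b, exp (c * max (y - b) 0) ∂gaussianReal 0 1
      = exp (c ^ 2 / 2 - c * b) * stdNormalCDF (c - b) := by
    rw [setIntegral_congr_fun measurableSet_Ioi fun y (hy : b < y) => by
      rw [max_eq_left (sub_nonneg.2 hy.le), mul_sub, exp_sub, div_eq_inv_mul]]
    rw [integral_const_mul, setIntegral_exp_mul_gaussianReal _ one_ne_zero _ measurableSet_Ioi,
      gaussianReal_Ioi_toReal, exp_sub]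
    simp only [NNReal.coe_one, zero_mul, zero_add, one_mul]
    ring
  rw [← integral_add_compl measurableSet_Iic (integrable_exp_mul_max_sub_const_gaussianReal c b),
    compl_Iic, h_below, h_above]

lemma integral_exp_mul_max_const_sub_gaussianReal (c b : ℝ) :
    ∫ y, exp (c * max (b - y) 0) ∂gaussianReal 0 1
      = 1 - stdNormalCDF b + exp (c ^ 2 / 2 + c * b) * stdNormalCDF (c + b) := by
  have hsymm : (gaussianReal 0 1).map (fun y => -y) = gaussianReal 0 1 := by
    rw [gaussianReal_map_neg, neg_zero]
  conv_lhs => rw [← hsymm]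
  rw [integral_map measurable_neg.aemeasurable (by fun_prop)]
  simpa [sub_eq_add_neg, add_comm, stdNormalCDF_neg] using
    integral_exp_mul_max_sub_const_gaussianReal c (-b)

lemma integral_exp_mul_two_sided_gaussianReal (k α₁ α₂ : ℝ) {β₁ β₂ : ℝ} (hβ : β₁ ≤ β₂) :
    ∫ y, exp (k * (α₁ * max (β₁ - y) 0 + α₂ * max (y - β₂) 0)) ∂gaussianReal 0 1
      = stdNormalCDF β₂ - stdNormalCDF β₁
        + exp ((k * α₂) ^ 2 / 2 - k * α₂ * β₂) * stdNormalCDF (k * α₂ - β₂)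
        + exp ((k * α₁) ^ 2 / 2 + k * α₁ * β₁) * stdNormalCDF (k * α₁ + β₁) := by
  have hsplit : ∀ y, exp (k * (α₁ * max (β₁ - y) 0 + α₂ * max (y - β₂) 0))
      = exp (k * α₁ * max (β₁ - y) 0) + exp (k * α₂ * max (y - β₂) 0) - 1 := by
    intro y
    rcases le_total y β₁ with hy | hy
    · rw [max_eq_right (by linarith : y - β₂ ≤ 0)]
      simp [mul_assoc]
    · rw [max_eq_right (sub_nonpos.2 hy)]
      simp [mul_assoc]
  simp only [hsplit]
  rw [integral_sub ((integrable_exp_mul_max_const_sub_gaussianReal _ _).fun_add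
      (integrable_exp_mul_max_sub_const_gaussianReal _ _)) (integrable_const 1),
    integral_add (integrable_exp_mul_max_const_sub_gaussianReal _ _)
      (integrable_exp_mul_max_sub_const_gaussianReal _ _),
    integral_exp_mul_max_const_sub_gaussianReal, integral_exp_mul_max_sub_const_gaussianReal]
  simp only [integral_const, probReal_univ, smul_eq_mul, mul_one]
  ring

theorem stmt_14_general (a α₁ α₂ β₁ β₂ t : ℝ) (hβ : β₁ ≤ β₂) :
    (∫ p : ℝ × ℝ,
        Real.exp (t * (a * (p.1 + α₁ * max (β₁ - p.2) 0 + α₂ * max (p.2 - β₂) 0)))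
        ∂((gaussianReal 0 1).prod (gaussianReal 0 1)))
    = Real.exp ((a * t) ^ 2 / 2) * (stdNormalCDF β₂ - stdNormalCDF β₁)
      + Real.exp ((t / 2) * (t * a ^ 2 * (1 + α₂ ^ 2) - 2 * a * α₂ * β₂)) *
          stdNormalCDF (t * a * α₂ - β₂)
      + Real.exp ((t / 2) * (t * a ^ 2 * (1 + α₁ ^ 2) + 2 * a * α₁ * β₁)) *
          stdNormalCDF (t * a * α₁ + β₁) := by
  have hindep : ∫ p : ℝ × ℝ,
        exp (t * (a * (p.1 + α₁ * max (β₁ - p.2) 0 + α₂ * max (p.2 - β₂) 0)))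
        ∂(gaussianReal 0 1).prod (gaussianReal 0 1)
      = (∫ x, exp (t * a * x) ∂gaussianReal 0 1) *
          ∫ y, exp (t * a * (α₁ * max (β₁ - y) 0 + α₂ * max (y - β₂) 0)) ∂gaussianReal 0 1 := by
    rw [← integral_prod_mul]
    congr 1 with p
    rw [← exp_add]
    ring_nf
  have hX : ∫ x, exp (t * a * x) ∂gaussianReal 0 1 = exp ((a * t) ^ 2 / 2) := by
    simpa [mgf, mul_comm a t] using congrFun (mgf_id_gaussianReal (μ := 0) (v := 1)) (t * a)
  rw [hindep, hX, integral_exp_mul_two_sided_gaussianReal _ _ _ hβ]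
  simp only [mul_add, ← mul_assoc, ← exp_add]
  ring_nf

/-- MGF of the extended skew normal variable `Z = aV`,
`V = X + α₁ max(β₁ − Y, 0) + α₂ max(Y − β₂, 0)` with `X, Y` independent standard normal
and `β₁ ≤ β₂`:
`M(t) = e^{(at)²/2}(N(β₂)−N(β₁)) + e^{(t/2)(ta²(1+α₂²)−2aα₂β₂)} N(taα₂−β₂)
      + e^{(t/2)(ta²(1+α₁²)+2aα₁β₁)} N(taα₁+β₁)`. -/
theorem stmt_14 (a α₁ α₂ β₁ β₂ t : ℝ) (ha : 0 < a) (hβ : β₁ ≤ β₂) :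
    (∫ p : ℝ × ℝ,
        Real.exp (t * (a * (p.1 + α₁ * max (β₁ - p.2) 0 + α₂ * max (p.2 - β₂) 0)))
        ∂((gaussianReal 0 1).prod (gaussianReal 0 1)))
    = Real.exp ((a * t) ^ 2 / 2) * (stdNormalCDF β₂ - stdNormalCDF β₁)
      + Real.exp ((t / 2) * (t * a ^ 2 * (1 + α₂ ^ 2) - 2 * a * α₂ * β₂)) *
          stdNormalCDF (t * a * α₂ - β₂)
      + Real.exp ((t / 2) * (t * a ^ 2 * (1 + α₁ ^ 2) + 2 * a * α₁ * β₁)) *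
          stdNormalCDF (t * a * α₁ + β₁) :=
  stmt_14_general a α₁ α₂ β₁ β₂ t hβ
end

section
/- Let f(T) = F̄ e^Z where Z is a random variable with finite E[e^{Z/2}] and E[e^{−Z/2}], and F̄ = F · E[e^{−Z/2}]/E[e^{Z/2}]. Then this choice of F̄ is the unique positive constant for which the no-arbitrage condition E[√f(T)]/E[1/√f(T)] = F holds, and the resulting call price (e^{−r_$ T}/E[1/√f(T)]) E[(√f(T) − K/√f(T))_+] equals e^{−r_$ T}(F·M(1/2,z₀)/M(1/2) − K·M(−1/2,z₀)/M(−1/2)), where z₀ = log(K/F̄), M(t) = E[e^{tZ}], and M(t,z₀) = E[e^{tZ} 1_{Z > z₀}]. -/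
/-!
Since `√(c e^Z) = √c · e^{Z/2}`, the ratio `E[√f(T)] / E[1/√f(T)]` equals
`c · E[e^{Z/2}] / E[e^{-Z/2}]`, which is linear in `c` and hence equals `F` for exactly one `c`.
The call payoff `(√f − K/√f)₊` is nonzero exactly when `f > K`, i.e. on `{Z > log (K/F̄)}`, where it
is `√F̄ e^{Z/2} − (K/√F̄) e^{−Z/2}`; integrating gives the two truncated moments, and
`F̄ · E[e^{Z/2}] = F · E[e^{−Z/2}]` converts the prefactor into `F / M(1/2)` and `K / M(−1/2)`.
-/

open MeasureTheory Real

lemma sqrt_mul_exp {c : ℝ} (hc : 0 ≤ c) (x : ℝ) : √(c * exp x) = √c * exp (x / 2) := by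
  rw [sqrt_mul hc, exp_half]

lemma inv_sqrt_mul_exp {c : ℝ} (hc : 0 ≤ c) (x : ℝ) :
    (√(c * exp x))⁻¹ = (√c)⁻¹ * exp (-x / 2) := by
  rw [sqrt_mul_exp hc, mul_inv, neg_div, exp_neg]

lemma max_sub_div_zero_eq_ite {y : ℝ} (hy : 0 < y) (K : ℝ) :
    max (y - K / y) 0 = if K < y ^ 2 then y - K / y else 0 := by
  split_ifs with hK
  · exact max_eq_left (by rw [sub_nonneg, div_le_iff₀ hy, ← sq]; exact hK.le)
  · exact max_eq_right (by rw [sub_nonpos, le_div_iff₀ hy, ← sq]; exact not_lt.1 hK)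

lemma log_div_lt_iff_lt_mul_exp {K c : ℝ} (hK : 0 < K) (hc : 0 < c) (x : ℝ) :
    log (K / c) < x ↔ K < c * exp x := by
  rw [log_lt_iff_lt_exp (div_pos hK hc), div_lt_iff₀' hc]

lemma call_payoff_sqrt_mul_exp {c K : ℝ} (hc : 0 < c) (hK : 0 < K) (x : ℝ) :
    max (√(c * exp x) - K / √(c * exp x)) 0
      = if log (K / c) < x then √c * exp (x / 2) - K / √c * exp (-x / 2) else 0 := by
  have hcx : 0 < c * exp x := by positivity
  rw [max_sub_div_zero_eq_ite (sqrt_pos.2 hcx), sq_sqrt hcx.le]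
  refine if_congr (log_div_lt_iff_lt_mul_exp hK hc x).symm ?_ rfl
  rw [div_eq_mul_inv K, inv_sqrt_mul_exp hc.le, sqrt_mul_exp hc.le]
  ring

section

variable {Ω : Type*} [MeasurableSpace Ω] (P : Measure Ω) (Z : Ω → ℝ)

lemma integral_sqrt_mul_exp {c : ℝ} (hc : 0 ≤ c) :
    ∫ ω, √(c * exp (Z ω)) ∂P = √c * ∫ ω, exp (Z ω / 2) ∂P := by
  simp_rw [sqrt_mul_exp hc, integral_const_mul]

lemma integral_inv_sqrt_mul_exp {c : ℝ} (hc : 0 ≤ c) :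
    ∫ ω, (√(c * exp (Z ω)))⁻¹ ∂P = (√c)⁻¹ * ∫ ω, exp (-Z ω / 2) ∂P := by
  simp_rw [inv_sqrt_mul_exp hc, integral_const_mul]

lemma integrable_ite {p : Ω → Prop} [DecidablePred p] (hp : MeasurableSet {ω | p ω})
    {f : Ω → ℝ} (hf : Integrable f P) : Integrable (fun ω => if p ω then f ω else 0) P := by
  refine (hf.indicator hp).congr (ae_of_all _ fun ω => ?_)
  simp [Set.indicator_apply]

lemma integral_ite_const_mul_sub {p : Ω → Prop} [DecidablePred p] (hp : MeasurableSet {ω | p ω})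
    {f g : Ω → ℝ} (hf : Integrable f P) (hg : Integrable g P) (a b : ℝ) :
    ∫ ω, (if p ω then a * f ω - b * g ω else 0) ∂P
      = a * ∫ ω, (if p ω then f ω else 0) ∂P - b * ∫ ω, (if p ω then g ω else 0) ∂P := by
  have h : ∀ ω, (if p ω then a * f ω - b * g ω else 0)
      = a * (if p ω then f ω else 0) - b * (if p ω then g ω else 0) := by
    intro ω; split_ifs <;> ring
  simp_rw [h]
  rw [integral_sub ((integrable_ite P hp hf).const_mul a) ((integrable_ite P hp hg).const_mul b),
    integral_const_mul, integral_const_mul]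

theorem integral_call_payoff_sqrt_mul_exp (hZ : Measurable Z)
    (h1 : Integrable (fun ω => exp (Z ω / 2)) P) (h2 : Integrable (fun ω => exp (-Z ω / 2)) P)
    {c K : ℝ} (hc : 0 < c) (hK : 0 < K) :
    ∫ ω, max (√(c * exp (Z ω)) - K / √(c * exp (Z ω))) 0 ∂P
      = √c * ∫ ω, (if log (K / c) < Z ω then exp (Z ω / 2) else 0) ∂P
        - K / √c * ∫ ω, (if log (K / c) < Z ω then exp (-Z ω / 2) else 0) ∂P := by
  simp_rw [call_payoff_sqrt_mul_exp hc hK]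
  exact integral_ite_const_mul_sub P (measurableSet_lt measurable_const hZ) h1 h2 _ _

end

lemma sqrt_mul_div_inv_sqrt_mul_eq_iff {A B c F : ℝ} (hA : 0 < A) (hB : 0 < B) (hc : 0 < c) :
    √c * A / ((√c)⁻¹ * B) = F ↔ c = F * B / A := by
  have hsc : √c ≠ 0 := (sqrt_pos.2 hc).ne'
  have h : √c * A / ((√c)⁻¹ * B) = c * A / B := by
    field_simp
    rw [sq_sqrt hc.le]
  rw [h, div_eq_iff hB.ne', eq_div_iff hA.ne']

lemma discounted_call_price_eq {F A B : ℝ} (hF : 0 < F) (hA : 0 < A) (hB : 0 < B)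
    (D K m₁ m₂ : ℝ) :
    D / ((√(F * B / A))⁻¹ * B) * (√(F * B / A) * m₁ - K / √(F * B / A) * m₂)
      = D * (F * m₁ / A - K * m₂ / B) := by
  have hc : 0 < F * B / A := by positivity
  have hsqrt : 0 < √(F * B / A) := sqrt_pos.2 hc
  field_simp
  rw [sq_sqrt hc.le]
  field_simp

/-- Extended skew normal pricing. Let `f(T) = F̄ e^Z` with `E[e^{±Z/2}] < ∞` and
`F̄ = F·E[e^{−Z/2}]/E[e^{Z/2}]`. Then `F̄` is the unique positive constant for which the
no-arbitrage condition `E[√f(T)]/E[1/√f(T)] = F` holds, and the call price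
`(e^{−r_$ T}/E[1/√f(T)]) E[(√f(T) − K/√f(T))₊]` equals
`e^{−r_$ T}(F·M(1/2,z₀)/M(1/2) − K·M(−1/2,z₀)/M(−1/2))`, where `z₀ = log(K/F̄)`,
`M(t) = E[e^{tZ}]` and `M(t,z₀) = E[e^{tZ} 1_{Z>z₀}]`. -/
theorem stmt_15 {Ω : Type*} [MeasurableSpace Ω] (P : Measure Ω) [IsProbabilityMeasure P]
    (Z : Ω → ℝ) (hZ : Measurable Z)
    (h1 : Integrable (fun ω => Real.exp (Z ω / 2)) P)
    (h2 : Integrable (fun ω => Real.exp (-(Z ω) / 2)) P)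
    (F K rUSD T : ℝ) (hF : 0 < F) (hK : 0 < K) :
    let Fbar := F * (∫ ω, Real.exp (-(Z ω) / 2) ∂P) / (∫ ω, Real.exp (Z ω / 2) ∂P)
    let M : ℝ → ℝ := fun t => ∫ ω, Real.exp (t * Z ω) ∂P
    let z₀ := Real.log (K / Fbar)
    let Mres : ℝ → ℝ := fun t => ∫ ω, (if z₀ < Z ω then Real.exp (t * Z ω) else 0) ∂P
    (∀ c : ℝ, 0 < c →
      ((∫ ω, Real.sqrt (c * Real.exp (Z ω)) ∂P) /
          (∫ ω, (Real.sqrt (c * Real.exp (Z ω)))⁻¹ ∂P) = F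
        ↔ c = Fbar))
    ∧ (Real.exp (-(rUSD * T)) / (∫ ω, (Real.sqrt (Fbar * Real.exp (Z ω)))⁻¹ ∂P)) *
        (∫ ω, max (Real.sqrt (Fbar * Real.exp (Z ω))
            - K / Real.sqrt (Fbar * Real.exp (Z ω))) 0 ∂P)
      = Real.exp (-(rUSD * T)) *
          (F * Mres (1 / 2) / M (1 / 2) - K * Mres (-(1 / 2)) / M (-(1 / 2))) := by
  intro Fbar M z₀ Mres
  have hA : 0 < ∫ ω, exp (Z ω / 2) ∂P := integral_exp_pos h1
  have hB : 0 < ∫ ω, exp (-Z ω / 2) ∂P := integral_exp_pos h2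
  have hFbar : 0 < Fbar := by positivity
  refine ⟨fun c hc => ?_, ?_⟩
  · rw [integral_sqrt_mul_exp P Z hc.le, integral_inv_sqrt_mul_exp P Z hc.le]
    exact sqrt_mul_div_inv_sqrt_mul_eq_iff hA hB hc
  have half_mul : ∀ x : ℝ, 1 / 2 * x = x / 2 := fun x => by ring
  have neg_half_mul : ∀ x : ℝ, -(1 / 2) * x = -x / 2 := fun x => by ring
  rw [integral_inv_sqrt_mul_exp P Z hFbar.le,
    integral_call_payoff_sqrt_mul_exp P Z hZ h1 h2 hFbar hK]
  simp only [M, Mres, half_mul, neg_half_mul]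
  exact discounted_call_price_eq hF hA hB _ _ _ _
end

section
/- If C(K) = (e^{−r_$ T}/E[1/√f(T)]) ∫₀^∞ (√x − K/√x)_+ ρ(x) dx is the intermediate-currency call price where ρ is the density of f(T), then C is twice differentiable in K and ∂²C/∂K² = (e^{−r_$ T}/(√K · E[1/√f(T)])) ρ(K) for K > 0; consequently for any first-order homogeneous payoff g, the price V = (e^{−r_$T}/E[1/√f(T)]) ∫₀^∞ x^{−1/2} g(x;K) ρ(x) dx equals ∫₀^∞ g(x;K) C''(x) dx. -/
/-!
On `x > 0` the call payoff factors as `(√x - K/√x)₊ = (x - K)₊ / √x`, so `C` is a constant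
times the ordinary call price `K ↦ ∫ (x - K)₊ w(x) dx` for the weight `w(x) = ρ(x)/√x`.
Since `K ↦ (x - K)₊` is 1-Lipschitz, differentiation under the integral gives the derivative
`-∫_K^∞ w`, and the fundamental theorem of calculus gives the second derivative `w(K)`.
The pricing identity then holds pointwise under the integral.
-/

open MeasureTheory Set Filter Topology

section CallIntegral

variable {μ : Measure ℝ} {w : ℝ → ℝ}

theorem lipschitzWith_max_sub_mul (x c : ℝ) :
    LipschitzWith (Real.nnabs c) fun K => max (x - K) 0 * c :=
  LipschitzWith.of_dist_le_mul fun a b => by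
    rw [Real.dist_eq, Real.dist_eq, ← sub_mul, abs_mul, Real.coe_nnabs, mul_comm]
    refine mul_le_mul_of_nonneg_left ?_ (abs_nonneg c)
    calc |max (x - a) 0 - max (x - b) 0| ≤ |(x - a) - (x - b)| := abs_max_sub_max_le_abs _ _ _
      _ = |a - b| := by rw [abs_sub_comm]; ring_nf

theorem hasDerivAt_max_sub_mul {x K : ℝ} (hx : x ≠ K) (c : ℝ) :
    HasDerivAt (fun K' => max (x - K') 0 * c) (-(Ioi K).indicator (fun _ => c) x) K := by
  rcases hx.lt_or_gt with hxK | hKx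
  · rw [indicator_of_notMem (notMem_Ioi.2 hxK.le), neg_zero]
    refine (hasDerivAt_const K 0).congr_of_eventuallyEq ?_
    filter_upwards [Ioi_mem_nhds hxK] with K' (hK' : x < K')
    rw [max_eq_right (by linarith), zero_mul]
  · rw [indicator_of_mem (mem_Ioi.2 hKx)]
    have h := ((hasDerivAt_id K).const_sub x).mul_const c
    refine (by simpa using h : HasDerivAt (fun K' => (x - K') * c) (-c) K).congr_of_eventuallyEq ?_
    filter_upwards [Iio_mem_nhds hKx] with K' (hK' : K' < x)
    rw [max_eq_left (by linarith)]

theorem integrable_max_sub_mul (hw : Integrable w μ) (hxw : Integrable (fun x => x * w x) μ)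
    (K : ℝ) : Integrable (fun x => max (x - K) 0 * w x) μ := by
  refine (hxw.norm.add (hw.norm.const_mul |K|)).mono'
    (((continuous_id.sub continuous_const).max continuous_const).aestronglyMeasurable.mul
      hw.aestronglyMeasurable) (ae_of_all _ fun x => ?_)
  have hmax : max (x - K) 0 ≤ |x| + |K| :=
    max_le (by linarith [le_abs_self x, neg_abs_le K]) (by positivity)
  calc ‖max (x - K) 0 * w x‖ = max (x - K) 0 * ‖w x‖ := by
        rw [norm_mul, Real.norm_of_nonneg (le_max_right _ _)]
    _ ≤ (|x| + |K|) * ‖w x‖ := by gcongr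
    _ = ‖x * w x‖ + |K| * ‖w x‖ := by rw [norm_mul, Real.norm_eq_abs x]; ring

theorem hasDerivAt_integral_max_sub_mul [NullSingletonClass μ] (hw : Integrable w μ)
    (hxw : Integrable (fun x => x * w x) μ) (K : ℝ) :
    HasDerivAt (fun K => ∫ x, max (x - K) 0 * w x ∂μ) (-∫ x in Ioi K, w x ∂μ) K := by
  have h := hasDerivAt_integral_of_dominated_loc_of_lip (x₀ := K) (bound := fun x => |w x|)
    (F' := fun x => -(Ioi K).indicator w x) univ_mem
    (Eventually.of_forall fun K' => (integrable_max_sub_mul hw hxw K').aestronglyMeasurable)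
    (integrable_max_sub_mul hw hxw K)
    (hw.aestronglyMeasurable.indicator measurableSet_Ioi).neg
    (ae_of_all _ fun x => by
      simpa using (lipschitzWith_max_sub_mul x (w x)).lipschitzOnWith (s := univ)) hw.abs
    ((Measure.ae_ne μ K).mono fun x hx => hasDerivAt_max_sub_mul hx (w x))
  rw [integral_neg, integral_indicator measurableSet_Ioi] at h
  exact h.2
  
end CallIntegral

theorem hasDerivAt_integral_Ioi {w : ℝ → ℝ} {a K : ℝ} (hw : IntegrableOn w (Ioi a))
    (haK : a < K) (hwK : ContinuousAt w K) :
    HasDerivAt (fun K => ∫ x in Ioi K, w x) (-w K) K := by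
  have hFTC : HasDerivAt (fun u => ∫ x in a..u, w x) (w K) K :=
    intervalIntegral.integral_hasDerivAt_right
      ((intervalIntegrable_iff_integrableOn_Ioc_of_le haK.le).2 (hw.mono_set Ioc_subset_Ioi_self))
      ⟨Ioi a, Ioi_mem_nhds haK, hw.aestronglyMeasurable⟩ hwK
  refine (hFTC.const_sub (∫ x in Ioi a, w x)).congr_of_eventuallyEq ?_
  filter_upwards [Ioi_mem_nhds haK] with u (hu : a < u)
  rw [← intervalIntegral.integral_Ioi_sub_Ioi hw hu.le, sub_sub_cancel]

theorem deriv_deriv_integral_max_sub_mul {w : ℝ → ℝ} {a K : ℝ}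
    (hw : IntegrableOn w (Ioi a)) (hxw : IntegrableOn (fun x => x * w x) (Ioi a))
    (hwc : ContinuousOn w (Ioi a)) (haK : a < K) :
    deriv (deriv fun K => ∫ x in Ioi a, max (x - K) 0 * w x) K = w K := by
  have hderiv : deriv (fun K => ∫ x in Ioi a, max (x - K) 0 * w x)
      =ᶠ[𝓝 K] fun K => -∫ x in Ioi K, w x := by
    filter_upwards [Ioi_mem_nhds haK] with u (hu : a < u)
    rw [(hasDerivAt_integral_max_sub_mul hw hxw u).deriv,
      Measure.restrict_restrict measurableSet_Ioi, Ioi_inter_Ioi, max_eq_left hu.le]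
  rw [hderiv.deriv_eq, deriv.fun_neg,
    (hasDerivAt_integral_Ioi hw haK (hwc.continuousAt (Ioi_mem_nhds haK))).deriv, neg_neg]

theorem max_sqrt_sub_div_sqrt_mul {x : ℝ} (hx : 0 < x) (K c : ℝ) :
    max (√x - K / √x) 0 * c = max (x - K) 0 * ((√x)⁻¹ * c) := by
  have hs : 0 < √x := Real.sqrt_pos.2 hx
  have h : max (√x - K / √x) 0 = max (x - K) 0 / √x := by
    rw [← max_div_div_right hs.le, zero_div, sub_div, Real.div_sqrt]
  rw [h, div_eq_mul_inv, mul_assoc]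

theorem stmt_16_general (ρ : ℝ → ℝ) (rUSD T I : ℝ)
    (hρc : ContinuousOn ρ (Set.Ioi 0))
    (hint1 : IntegrableOn (fun x => Real.sqrt x * ρ x) (Set.Ioi 0))
    (hint2 : IntegrableOn (fun x => (Real.sqrt x)⁻¹ * ρ x) (Set.Ioi 0)) :
    let C : ℝ → ℝ := fun K =>
      (Real.exp (-(rUSD * T)) / I) *
        ∫ x in Set.Ioi (0 : ℝ), max (Real.sqrt x - K / Real.sqrt x) 0 * ρ x
    (∀ K > (0 : ℝ),
      deriv (deriv C) K = (Real.exp (-(rUSD * T)) / (Real.sqrt K * I)) * ρ K)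
    ∧ (∀ g : ℝ → ℝ → ℝ,
        (∀ a > (0 : ℝ), ∀ x > (0 : ℝ), ∀ K ≥ (0 : ℝ), a * g x K = g (a * x) (a * K)) →
        ∀ K ≥ (0 : ℝ),
        IntegrableOn (fun x => (Real.sqrt x)⁻¹ * g x K * ρ x) (Set.Ioi 0) →
        (Real.exp (-(rUSD * T)) / I) *
            (∫ x in Set.Ioi (0 : ℝ), (Real.sqrt x)⁻¹ * g x K * ρ x)
          = ∫ x in Set.Ioi (0 : ℝ), g x K * deriv (deriv C) x) := by
  intro C
  set c := Real.exp (-(rUSD * T)) / I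
  set w : ℝ → ℝ := fun x => (√x)⁻¹ * ρ x
  have hxw : IntegrableOn (fun x => x * w x) (Ioi 0) :=
    hint1.congr_fun (fun x _ => by simp only [w, ← mul_assoc, ← div_eq_mul_inv, Real.div_sqrt])
      measurableSet_Ioi
  have hwc : ContinuousOn w (Ioi 0) :=
    (Real.continuous_sqrt.continuousOn.inv₀ fun x hx => (Real.sqrt_pos.2 hx).ne').mul hρc
  have hC : C = fun K => c * ∫ x in Ioi 0, max (x - K) 0 * w x := funext fun K =>
    congrArg (c * ·) (setIntegral_congr_fun measurableSet_Ioi fun x hx =>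
      max_sqrt_sub_div_sqrt_mul hx K (ρ x))
  have hC'' : ∀ K > 0, deriv (deriv C) K = c * w K := fun K hK => by
    rw [hC, deriv_const_mul_field', deriv_const_mul_field']
    exact congrArg (c * ·) (deriv_deriv_integral_max_sub_mul hint2 hxw hwc hK)
  refine ⟨fun K hK => ?_, fun g _ K _ _ => ?_⟩
  · rw [hC'' K hK]
    ring
  · rw [← integral_const_mul]
    refine setIntegral_congr_fun measurableSet_Ioi fun x hx => ?_
    rw [hC'' x hx]
    ring

/-- Model-free pricing for a single pair. If
`C(K) = (e^{−r_$ T}/I) ∫₀^∞ (√x − K/√x)₊ ρ(x) dx`, where `ρ` is the (continuous) density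
of `f(T)` and `I = E[1/√f(T)] = ∫₀^∞ x^{−1/2} ρ(x) dx`, then
`C''(K) = (e^{−r_$ T}/(√K·I)) ρ(K)` for `K > 0`; consequently, for any first-order
homogeneous payoff `g`, the price `V = (e^{−r_$ T}/I) ∫₀^∞ x^{−1/2} g(x;K) ρ(x) dx`
equals `∫₀^∞ g(x;K) C''(x) dx`. -/
theorem stmt_16 (ρ : ℝ → ℝ) (rUSD T I : ℝ)
    (hρc : ContinuousOn ρ (Set.Ioi 0)) (hρ0 : ∀ x ∈ Set.Ioi (0 : ℝ), 0 ≤ ρ x)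
    (hI : 0 < I)
    (hIdef : I = ∫ x in Set.Ioi (0 : ℝ), (Real.sqrt x)⁻¹ * ρ x)
    (hint1 : IntegrableOn (fun x => Real.sqrt x * ρ x) (Set.Ioi 0))
    (hint2 : IntegrableOn (fun x => (Real.sqrt x)⁻¹ * ρ x) (Set.Ioi 0)) :
    let C : ℝ → ℝ := fun K =>
      (Real.exp (-(rUSD * T)) / I) *
        ∫ x in Set.Ioi (0 : ℝ), max (Real.sqrt x - K / Real.sqrt x) 0 * ρ x
    (∀ K > (0 : ℝ),
      deriv (deriv C) K = (Real.exp (-(rUSD * T)) / (Real.sqrt K * I)) * ρ K)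
    ∧ (∀ g : ℝ → ℝ → ℝ,
        (∀ a > (0 : ℝ), ∀ x > (0 : ℝ), ∀ K ≥ (0 : ℝ), a * g x K = g (a * x) (a * K)) →
        ∀ K ≥ (0 : ℝ),
        IntegrableOn (fun x => (Real.sqrt x)⁻¹ * g x K * ρ x) (Set.Ioi 0) →
        (Real.exp (-(rUSD * T)) / I) *
            (∫ x in Set.Ioi (0 : ℝ), (Real.sqrt x)⁻¹ * g x K * ρ x)
          = ∫ x in Set.Ioi (0 : ℝ), g x K * deriv (deriv C) x) :=
  stmt_16_general ρ rUSD T I hρc hint1 hint2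
end
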